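/- Let 0 < θ < 1 and w_n = n^(-θ). Then for every positive integer k, the normalized constant-coefficient block basis (d_i^(k))_{i≥1} of d(w,p), given by d_i^(k) = W_k^{-1/p} Σ_{n=(i-1)k+1}^{ik} e_n, is C-equivalent to the unit vector basis (e_n) of d(w,p), where the constant C depends only on θ and p (not on k). Explicitly, ((1-θ)/2) w_i ≤ w_i^(k) ≤ ((2-2^θ)/(2^(1-θ)-1)) w_i for all i, k. -/

import Mathlib

/-- The Lorentz sequence space norm (coordinates indexed by `ℕ` starting at 0, so `w n` is the
paper's `w_{n+1}`): `‖f‖_{d(w,p)} = (sup_{π ∈ Perm ℕ} Σ_n |f(π n)|^p w_n)^{1/p}`. -/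
noncomputable def lorentzNorm (w : ℕ → ℝ) (p : ℝ) (f : ℕ → ℝ) : ℝ :=
  (⨆ π : Equiv.Perm ℕ, ∑' n : ℕ, |f (π n)| ^ p * w n) ^ (1 / p)

/-!
For a decreasing weight `w` and a finitely supported `c ≥ 0`, the supremum of
`∑ n, c (π n) * w n` over permutations `π` is attained at any `π` making `c ∘ π` decreasing:
such a `π` maximises every partial sum, and Abel summation transfers this to the weighted sum.
A decreasing rearrangement `τ` of `|b| ^ p` lifts blockwise to one of the block vector
`n ↦ b (n / k) * W_k ^ (-1/p)`, so the `p`-th power of its norm is `∑ i, |b (τ i)| ^ p * w⁽ᵏ⁾ i`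
with the averaged weights `w⁽ᵏ⁾ i = W_k⁻¹ ∑_{n ∈ block i} w n`. Hence two-sided bounds
`K⁻¹ w ≤ w⁽ᵏ⁾ ≤ K w` give `K ^ (1/p)`-equivalence. For `w n = (n + 1) ^ (-θ)`, each block sum lies
between `k` times the weight at the block's two ends, `W_k` lies between `k ^ (1-θ)` and
`k ^ (1-θ) / (1-θ)` (Bernoulli's inequality), and so `(1-θ) w ≤ w⁽ᵏ⁾ ≤ 2 ^ θ w`.
-/

open Finset Function

theorem Finset.sum_le_sum_of_card_eq_of_forall_le {α M : Type*} [AddCommMonoid M] [LinearOrder M]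
    [IsOrderedAddMonoid M] {s t : Finset α} {f : α → M} (hcard : #s = #t)
    (h : ∀ x ∈ s, ∀ y ∈ t, f x ≤ f y) : ∑ x ∈ s, f x ≤ ∑ y ∈ t, f y := by
  rcases t.eq_empty_or_nonempty with rfl | ht
  · simp_all
  obtain ⟨y₀, hy₀, hmin⟩ := t.exists_min_image f ht
  calc ∑ x ∈ s, f x ≤ #s • f y₀ := sum_le_card_nsmul _ _ _ fun x hx => h x hx y₀ hy₀
    _ = #t • f y₀ := by rw [hcard]
    _ ≤ ∑ y ∈ t, f y := card_nsmul_le_sum _ _ _ hmin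

section Rearrangement

variable {w d : ℕ → ℝ}

theorem sum_range_mul_le_of_sum_range_le (hw : Antitone w) (hw0 : 0 ≤ w) {a b : ℕ → ℝ}
    (hab : ∀ n, ∑ m ∈ range n, a m ≤ ∑ m ∈ range n, b m) (N : ℕ) :
    ∑ m ∈ range N, a m * w m ≤ ∑ m ∈ range N, b m * w m := by
  have hD (n : ℕ) : 0 ≤ ∑ m ∈ range n, (b m - a m) := by
    rw [sum_sub_distrib]; linarith [hab n]
  -- Abel summation: the partial sums of `b - a` are nonnegative and `w` is decreasing.
  have key (n : ℕ) :
      (∑ m ∈ range n, (b m - a m)) * w n ≤ ∑ m ∈ range n, (b m - a m) * w m := by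
    induction n with
    | zero => simp
    | succ n ih =>
      calc (∑ m ∈ range (n + 1), (b m - a m)) * w (n + 1)
          ≤ (∑ m ∈ range (n + 1), (b m - a m)) * w n :=
            mul_le_mul_of_nonneg_left (hw n.le_succ) (hD _)
        _ ≤ ∑ m ∈ range (n + 1), (b m - a m) * w m := by
            rw [sum_range_succ, sum_range_succ, add_mul]; linarith
  have := (mul_nonneg (hD N) (hw0 N)).trans (key N)
  simp only [sub_mul, sum_sub_distrib] at this
  linarith

theorem sum_range_comp_perm_le_of_antitone {τ : Equiv.Perm ℕ} (hτ : Antitone (d ∘ τ))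
    (σ : Equiv.Perm ℕ) (N : ℕ) : ∑ m ∈ range N, d (σ m) ≤ ∑ m ∈ range N, d (τ m) := by
  classical
  have hmap (π : Equiv.Perm ℕ) :
      ∑ m ∈ range N, d (π m) = ∑ x ∈ (range N).map π.toEmbedding, d x := by simp
  rw [hmap, hmap, ← sum_sdiff_le_sum_sdiff]
  refine sum_le_sum_of_card_eq_of_forall_le (card_sdiff_comm (by simp)) fun x hx y hy => ?_
  obtain ⟨i, hi, rfl⟩ := mem_map.1 (mem_sdiff.1 hy).1
  have hx : N ≤ τ.symm x := by
    by_contra! h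
    exact (mem_sdiff.1 hx).2 (mem_map.2 ⟨τ.symm x, mem_range.2 h, by simp⟩)
  simpa using hτ ((mem_range.1 hi).le.trans hx)

theorem tsum_comp_perm_mul_le_of_antitone (hw : Antitone w) (hw0 : 0 ≤ w)
    (hd : (support d).Finite) {τ : Equiv.Perm ℕ} (hτ : Antitone (d ∘ τ)) (σ : Equiv.Perm ℕ) :
    ∑' n, d (σ n) * w n ≤ ∑' n, d (τ n) * w n := by
  have hfin (π : Equiv.Perm ℕ) : (π ⁻¹' support d).Finite := hd.preimage π.injective.injOn
  obtain ⟨N, hN⟩ := exists_nat_subset_range ((hfin σ).toFinset ∪ (hfin τ).toFinset)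
  have hvanish (π : Equiv.Perm ℕ) (hπ : (hfin π).toFinset ⊆ range N) :
      ∀ n ∉ range N, d (π n) * w n = 0 := fun n hn => by
    rw [notMem_support.1 fun h => hn (hπ ((hfin π).mem_toFinset.2 h)), zero_mul]
  rw [tsum_eq_sum (hvanish σ (subset_union_left.trans hN)),
    tsum_eq_sum (hvanish τ (subset_union_right.trans hN))]
  exact sum_range_mul_le_of_sum_range_le hw hw0 (sum_range_comp_perm_le_of_antitone hτ σ) N

theorem iSup_tsum_comp_perm_mul_eq (hw : Antitone w) (hw0 : 0 ≤ w) (hd : (support d).Finite)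
    {τ : Equiv.Perm ℕ} (hτ : Antitone (d ∘ τ)) :
    ⨆ π : Equiv.Perm ℕ, ∑' n, d (π n) * w n = ∑' n, d (τ n) * w n :=
  le_antisymm (ciSup_le (tsum_comp_perm_mul_le_of_antitone hw hw0 hd hτ))
    (le_ciSup ⟨_, Set.forall_mem_range.2 (tsum_comp_perm_mul_le_of_antitone hw hw0 hd hτ)⟩ τ)

theorem exists_perm_antitone_comp (hd0 : 0 ≤ d) (hd : (support d).Finite) :
    ∃ τ : Equiv.Perm ℕ, Antitone (d ∘ τ) := by
  classical
  -- insert the elements of `s` in order of decreasing `d`, each one right after the prefix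
  have key (s : Finset ℕ) : ∃ τ : Equiv.Perm ℕ,
      (range #s).map τ.toEmbedding = s ∧ AntitoneOn (d ∘ τ) (Set.Iio #s) := by
    induction s using Finset.induction_on_min_value d with
    | empty => exact ⟨1, by simp, fun i hi => by simp at hi⟩
    | insert a s has hmin ih =>
      obtain ⟨τ, himg, hanti⟩ := ih
      have hmem : ∀ i < #s, τ i ∈ s := fun i hi => himg ▸ mem_map_of_mem _ (mem_range.2 hi)
      have hfix : ∀ i < #s, Equiv.swap (τ #s) a (τ i) = τ i := fun i hi =>
        Equiv.swap_apply_of_ne_of_ne (τ.injective.ne hi.ne) (ne_of_mem_of_not_mem (hmem i hi) has)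
      refine ⟨τ.trans (Equiv.swap (τ #s) a), ?_, ?_⟩
      · rw [card_insert_of_notMem has, range_add_one, map_insert, Equiv.coe_toEmbedding,
          Equiv.trans_apply, Equiv.swap_apply_left]
        congr 1
        conv_rhs => rw [← himg]
        rw [map_eq_image, map_eq_image]
        exact image_congr fun i hi => by simpa using hfix i (mem_range.1 hi)
      · intro i hi j hj hij
        rw [card_insert_of_notMem has, Set.mem_Iio, Nat.lt_succ_iff] at hi hj
        simp only [comp_apply, Equiv.trans_apply]
        rcases hj.lt_or_eq with hj | rfl
        · rw [hfix i (hij.trans_lt hj), hfix j hj]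
          exact hanti (hij.trans_lt hj) hj hij
        · rw [Equiv.swap_apply_left]
          rcases hi.lt_or_eq with hi | rfl
          · rw [hfix i hi]
            exact hmin _ (hmem i hi)
          · rw [Equiv.swap_apply_left]
  obtain ⟨τ, himg, hanti⟩ := key hd.toFinset
  refine ⟨τ, fun i j hij => ?_⟩
  by_cases hj : j < #hd.toFinset
  · exact hanti (hij.trans_lt hj) hj hij
  · have : d (τ j) = 0 := by
      by_contra h
      obtain ⟨i', hi', he⟩ := mem_map.1 (himg ▸ hd.mem_toFinset.2 h)
      exact hj (τ.injective he ▸ mem_range.1 hi')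
    simpa [this] using hd0 (τ i)

end Rearrangement

section Blocks

def blockSum (w : ℕ → ℝ) (k j : ℕ) : ℝ := ∑ r ∈ range k, w (j * k + r)

@[simp]
theorem blockSum_zero (w : ℕ → ℝ) (k : ℕ) : blockSum w k 0 = ∑ n ∈ range k, w n := by
  simp [blockSum]

theorem sum_Ico_eq_blockSum (w : ℕ → ℝ) (k j : ℕ) :
    ∑ n ∈ Ico (j * k) ((j + 1) * k), w n = blockSum w k j := by
  rw [sum_Ico_eq_sum_range, add_one_mul, Nat.add_sub_cancel_left]
  rfl

theorem exists_perm_div_eq {k : ℕ} (hk : 0 < k) (π : Equiv.Perm ℕ) :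
    ∃ σ : Equiv.Perm ℕ, ∀ m, σ m / k = π (m / k) := by
  have : NeZero k := ⟨hk.ne'⟩
  exact ⟨(Nat.divModEquiv k).trans
      ((Equiv.prodCongr π (Equiv.refl _)).trans (Nat.divModEquiv k).symm),
    fun m => congrArg Prod.fst ((Nat.divModEquiv k).apply_symm_apply _)⟩

theorem support_comp_div_finite {c : ℕ → ℝ} (hc : (support c).Finite) {k : ℕ} (hk : 0 < k) :
    (support fun n => c (n / k)).Finite :=
  hc.preimage' fun j _ => (Set.finite_Iio ((j + 1) * k)).subset fun n hn =>
    (Nat.div_lt_iff_lt_mul hk).1 <| by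
      simp only [Set.mem_preimage, Set.mem_singleton_iff] at hn; omega

theorem tsum_comp_div_mul_eq {k : ℕ} (hk : 0 < k) {c : ℕ → ℝ} (hc : (support c).Finite)
    (w : ℕ → ℝ) : ∑' m, c (m / k) * w m = ∑' j, c j * blockSum w k j := by
  have : NeZero k := ⟨hk.ne'⟩
  have hsum : Summable fun p : ℕ × Fin k => c p.1 * w (p.1 * k + p.2) :=
    summable_of_hasFiniteSupport <| (hc.prod Set.finite_univ).subset
      fun p hp => ⟨left_ne_zero_of_mul hp, trivial⟩
  calc ∑' m, c (m / k) * w m = ∑' p : ℕ × Fin k, c p.1 * w (p.1 * k + p.2) := by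
        rw [← (Nat.divModEquiv k).symm.tsum_eq]
        congr with p
        have hdiv : (Nat.divModEquiv k).symm p / k = p.1 :=
          congrArg Prod.fst ((Nat.divModEquiv k).apply_symm_apply p)
        rw [hdiv, Nat.divModEquiv_symm_apply]
    _ = ∑' j, c j * blockSum w k j := by
        simp only [hsum.tsum_prod, tsum_fintype, blockSum, mul_sum]
        congr with j
        exact Fin.sum_univ_eq_sum_range (fun r => c j * w (j * k + r)) k

theorem iSup_tsum_comp_div_mul_eq {w : ℕ → ℝ} (hw : Antitone w) (hw0 : 0 ≤ w) {k : ℕ}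
    (hk : 0 < k) {c : ℕ → ℝ} (hc : (support c).Finite) {τ : Equiv.Perm ℕ}
    (hτ : Antitone (c ∘ τ)) :
    ⨆ π : Equiv.Perm ℕ, ∑' n, c (π n / k) * w n = ∑' j, c (τ j) * blockSum w k j := by
  obtain ⟨σ, hσ⟩ := exists_perm_div_eq hk τ
  have hσ' : (fun n => c (n / k)) ∘ σ = (c ∘ τ) ∘ fun n => n / k := funext fun n => by simp [hσ]
  rw [iSup_tsum_comp_perm_mul_eq hw hw0 (support_comp_div_finite hc hk)
    (hσ' ▸ hτ.comp_monotone fun _ _ h => Nat.div_le_div_right h)]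
  simp only [hσ]
  exact tsum_comp_div_mul_eq hk (hc.preimage τ.injective.injOn) w

end Blocks

section BlockExpansion

variable {w : ℕ → ℝ}

/-- The vector `∑ i, b i • d_i⁽ᵏ⁾`: coordinate `n` lies in the block `n / k`. -/
noncomputable def blockExpansion (w : ℕ → ℝ) (p : ℝ) (k : ℕ) (b : ℕ → ℝ) : ℕ → ℝ :=
  fun n => b (n / k) * (∑ m ∈ range k, w m) ^ (-(1 / p))

theorem abs_mul_rpow_neg_inv_rpow {p W : ℝ} (hp : 0 < p) (hW : 0 ≤ W) (x : ℝ) :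
    |x * W ^ (-(1 / p))| ^ p = W⁻¹ * |x| ^ p := by
  rw [abs_mul, abs_of_nonneg (Real.rpow_nonneg hW _), Real.mul_rpow (abs_nonneg x)
    (Real.rpow_nonneg hW _), ← Real.rpow_mul hW, neg_mul, one_div_mul_cancel hp.ne',
    Real.rpow_neg_one, mul_comm]

theorem iSup_tsum_blockExpansion_le (hw : Antitone w) (hw0 : ∀ n, 0 < w n) {k : ℕ}
    (hk : 0 < k) {K : ℝ} (hlow : ∀ j, w j * ∑ n ∈ range k, w n ≤ K * blockSum w k j)
    (hup : ∀ j, blockSum w k j ≤ K * w j * ∑ n ∈ range k, w n) {p : ℝ} (hp : 0 < p)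
    {b : ℕ → ℝ} (hb : (support b).Finite) :
    (⨆ π : Equiv.Perm ℕ, ∑' n, |b (π n)| ^ p * w n) ≤
        K * ⨆ π : Equiv.Perm ℕ, ∑' n, |blockExpansion w p k b (π n)| ^ p * w n ∧
      (⨆ π : Equiv.Perm ℕ, ∑' n, |blockExpansion w p k b (π n)| ^ p * w n) ≤
        K * ⨆ π : Equiv.Perm ℕ, ∑' n, |b (π n)| ^ p * w n := by
  set W := ∑ m ∈ range k, w m with hW_def
  have hW : 0 < W := sum_pos (fun n _ => hw0 n) (nonempty_range_iff.2 hk.ne')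
  have hw0' : 0 ≤ w := fun n => (hw0 n).le
  set c : ℕ → ℝ := fun n => |b n| ^ p
  have hc0 : 0 ≤ c := fun n => Real.rpow_nonneg (abs_nonneg _) p
  have hc : (support c).Finite :=
    hb.subset fun n hn hbn => hn (by simp [c, hbn, Real.zero_rpow hp.ne'])
  obtain ⟨τ, hτ⟩ := exists_perm_antitone_comp hc0 hc
  have hY : ⨆ π : Equiv.Perm ℕ, ∑' n, |blockExpansion w p k b (π n)| ^ p * w n =
      ∑' j, W⁻¹ * c (τ j) * blockSum w k j := by
    simp only [blockExpansion, ← hW_def, abs_mul_rpow_neg_inv_rpow hp hW.le]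
    exact iSup_tsum_comp_div_mul_eq hw hw0' hk (c := fun n => W⁻¹ * c n)
      (hc.subset fun n hn => right_ne_zero_of_mul hn) (hτ.const_mul (inv_nonneg.2 hW.le))
  have hsum (f : ℕ → ℝ) (hf : ∀ j, c (τ j) = 0 → f j = 0) : Summable f :=
    summable_of_hasFiniteSupport <| (hc.preimage τ.injective.injOn).subset
      fun j hj hcj => hj (hf j hcj)
  have hcW (j : ℕ) : 0 ≤ W⁻¹ * c (τ j) := mul_nonneg (inv_nonneg.2 hW.le) (hc0 _)
  rw [iSup_tsum_comp_perm_mul_eq hw hw0' hc hτ, hY, ← tsum_mul_left, ← tsum_mul_left]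
  constructor
  · refine (hsum _ fun j h => by simp [h]).tsum_le_tsum (fun j => ?_)
      (hsum _ fun j h => by simp [h])
    calc c (τ j) * w j = W⁻¹ * c (τ j) * (w j * W) := by field_simp
      _ ≤ W⁻¹ * c (τ j) * (K * blockSum w k j) := mul_le_mul_of_nonneg_left (hlow j) (hcW j)
      _ = K * (W⁻¹ * c (τ j) * blockSum w k j) := by ring
  · refine (hsum _ fun j h => by simp [h]).tsum_le_tsum (fun j => ?_)
      (hsum _ fun j h => by simp [h])
    calc W⁻¹ * c (τ j) * blockSum w k j ≤ W⁻¹ * c (τ j) * (K * w j * W) :=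
          mul_le_mul_of_nonneg_left (hup j) (hcW j)
      _ = K * (c (τ j) * w j) := by field_simp

theorem iSup_tsum_abs_rpow_mul_nonneg (hw0 : 0 ≤ w) (p : ℝ) (f : ℕ → ℝ) :
    0 ≤ ⨆ π : Equiv.Perm ℕ, ∑' n, |f (π n)| ^ p * w n :=
  Real.iSup_nonneg fun _ => tsum_nonneg fun n =>
    mul_nonneg (Real.rpow_nonneg (abs_nonneg _) p) (hw0 n)

theorem lorentzNorm_le_rpow_mul (hw0 : 0 ≤ w) {p K : ℝ} (hp : 0 < p) (hK : 0 ≤ K)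
    {f g : ℕ → ℝ}
    (h : ⨆ π : Equiv.Perm ℕ, ∑' n, |f (π n)| ^ p * w n ≤
      K * ⨆ π : Equiv.Perm ℕ, ∑' n, |g (π n)| ^ p * w n) :
    lorentzNorm w p f ≤ K ^ (1 / p) * lorentzNorm w p g :=
  (Real.rpow_le_rpow (iSup_tsum_abs_rpow_mul_nonneg hw0 p f) h (by positivity)).trans_eq
    (Real.mul_rpow hK (iSup_tsum_abs_rpow_mul_nonneg hw0 p g))

theorem lorentzNorm_blockExpansion_le (hw : Antitone w) (hw0 : ∀ n, 0 < w n) {k : ℕ}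
    (hk : 0 < k) {K : ℝ} (hlow : ∀ j, w j * ∑ n ∈ range k, w n ≤ K * blockSum w k j)
    (hup : ∀ j, blockSum w k j ≤ K * w j * ∑ n ∈ range k, w n) {p : ℝ} (hp : 0 < p)
    {b : ℕ → ℝ} (hb : (support b).Finite) :
    lorentzNorm w p b ≤ K ^ (1 / p) * lorentzNorm w p (blockExpansion w p k b) ∧
      lorentzNorm w p (blockExpansion w p k b) ≤ K ^ (1 / p) * lorentzNorm w p b := by
  have hW : 0 < ∑ n ∈ range k, w n := sum_pos (fun n _ => hw0 n) (nonempty_range_iff.2 hk.ne')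
  have hK : 0 ≤ K := by
    have : 1 ≤ K * w 0 := le_of_mul_le_mul_right (by simpa using hup 0) hW
    nlinarith [hw0 0]
  obtain ⟨h₁, h₂⟩ := iSup_tsum_blockExpansion_le hw hw0 hk hlow hup hp hb
  exact ⟨lorentzNorm_le_rpow_mul (fun n => (hw0 n).le) hp hK h₁,
    lorentzNorm_le_rpow_mul (fun n => (hw0 n).le) hp hK h₂⟩

end BlockExpansion

noncomputable def powerWeight (θ : ℝ) (n : ℕ) : ℝ := ((n : ℝ) + 1) ^ (-θ)

theorem powerWeight_apply (θ : ℝ) (n : ℕ) : powerWeight θ n = ((n : ℝ) + 1) ^ (-θ) := rfl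

namespace powerWeight

variable {θ : ℝ}

theorem pos (θ : ℝ) (n : ℕ) : 0 < powerWeight θ n := by unfold powerWeight; positivity

@[simp]
theorem zero (θ : ℝ) : powerWeight θ 0 = 1 := by simp [powerWeight]

theorem antitone (hθ : 0 ≤ θ) : Antitone (powerWeight θ) := fun m n h =>
  Real.rpow_le_rpow_of_nonpos (by positivity) (by gcongr) (neg_nonpos.2 hθ)

theorem one_sub_mul_le_rpow_sub_rpow (hθ0 : 0 ≤ θ) (hθ1 : θ ≤ 1) (n : ℕ) :
    (1 - θ) * powerWeight θ n ≤ ((n : ℝ) + 1) ^ (1 - θ) - (n : ℝ) ^ (1 - θ) := by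
  set a : ℝ := n + 1
  have ha : 0 < a := by positivity
  have h1a : 1 / a ≤ 1 := by rw [div_le_one ha]; simp [a]
  -- Bernoulli: `(1 - 1/a) ^ (1 - θ) ≤ 1 - (1 - θ) / a`
  have hB := rpow_one_add_le_one_add_mul_self (by linarith : -1 ≤ -(1 / a))
    (by linarith : 0 ≤ 1 - θ) (by linarith : 1 - θ ≤ 1)
  have hn : (n : ℝ) = a * (1 + -(1 / a)) := by field_simp; ring
  have hpow : a ^ (1 - θ) * a⁻¹ = a ^ (-θ) := by
    rw [← Real.rpow_neg_one, ← Real.rpow_add ha]; ring_nf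
  have hrhs : a ^ (1 - θ) * (1 + (1 - θ) * -(1 / a)) = a ^ (1 - θ) - (1 - θ) * a ^ (-θ) := by
    rw [← hpow]; ring
  have := mul_le_mul_of_nonneg_left hB (Real.rpow_nonneg ha.le (1 - θ))
  change (1 - θ) * a ^ (-θ) ≤ a ^ (1 - θ) - (n : ℝ) ^ (1 - θ)
  rw [hn, Real.mul_rpow ha.le (by linarith)]
  linarith

theorem sum_range_le (hθ0 : 0 ≤ θ) (hθ1 : θ < 1) (k : ℕ) :
    ∑ n ∈ range k, powerWeight θ n ≤ (k : ℝ) ^ (1 - θ) / (1 - θ) := by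
  have h1θ : 0 < 1 - θ := by linarith
  rw [le_div_iff₀ h1θ, mul_comm, mul_sum]
  calc ∑ n ∈ range k, (1 - θ) * powerWeight θ n
      ≤ ∑ n ∈ range k, (((n + 1 : ℕ) : ℝ) ^ (1 - θ) - (n : ℝ) ^ (1 - θ)) :=
        sum_le_sum fun n _ => by simpa using one_sub_mul_le_rpow_sub_rpow hθ0 hθ1.le n
    _ = (k : ℝ) ^ (1 - θ) := by
        rw [sum_range_sub (fun n : ℕ => (n : ℝ) ^ (1 - θ))]
        simp [Real.zero_rpow h1θ.ne']

theorem rpow_mul_le_blockSum (hθ : 0 ≤ θ) {k : ℕ} (hk : 0 < k) (j : ℕ) :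
    (k : ℝ) ^ (1 - θ) * powerWeight θ j ≤ blockSum (powerWeight θ) k j := by
  have hkR : (0 : ℝ) < k := by exact_mod_cast hk
  calc (k : ℝ) ^ (1 - θ) * powerWeight θ j = #(range k) • (((j + 1) * k : ℕ) : ℝ) ^ (-θ) := by
        rw [card_range, nsmul_eq_mul, powerWeight, Nat.cast_mul,
          Real.mul_rpow (by positivity) hkR.le, sub_eq_add_neg, Real.rpow_add hkR, Real.rpow_one]
        push_cast; ring
    _ ≤ blockSum (powerWeight θ) k j := card_nsmul_le_sum _ _ _ fun r hr =>
        Real.rpow_le_rpow_of_nonpos (by positivity)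
          (by have := mem_range.1 hr; norm_cast; nlinarith) (neg_nonpos.2 hθ)

theorem blockSum_le_rpow_mul (hθ : 0 ≤ θ) {k j : ℕ} (hk : 0 < k) (hj : 0 < j) :
    blockSum (powerWeight θ) k j ≤ (k : ℝ) ^ (1 - θ) * (j : ℝ) ^ (-θ) := by
  have hkR : (0 : ℝ) < k := by exact_mod_cast hk
  calc blockSum (powerWeight θ) k j ≤ #(range k) • ((j * k : ℕ) : ℝ) ^ (-θ) :=
        sum_le_card_nsmul _ _ _ fun r hr =>
          Real.rpow_le_rpow_of_nonpos (by positivity) (by push_cast; linarith) (neg_nonpos.2 hθ)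
    _ = (k : ℝ) ^ (1 - θ) * (j : ℝ) ^ (-θ) := by
        rw [card_range, nsmul_eq_mul, Nat.cast_mul, Real.mul_rpow (by positivity) hkR.le,
          sub_eq_add_neg, Real.rpow_add hkR, Real.rpow_one]
        ring

theorem one_sub_mul_mul_sum_le_blockSum (hθ0 : 0 ≤ θ) (hθ1 : θ < 1) {k : ℕ} (hk : 0 < k)
    (j : ℕ) :
    (1 - θ) * powerWeight θ j * ∑ n ∈ range k, powerWeight θ n ≤
      blockSum (powerWeight θ) k j := by
  have h1θ : 0 < 1 - θ := by linarith
  calc (1 - θ) * powerWeight θ j * ∑ n ∈ range k, powerWeight θ n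
      ≤ (1 - θ) * powerWeight θ j * ((k : ℝ) ^ (1 - θ) / (1 - θ)) :=
        mul_le_mul_of_nonneg_left (sum_range_le hθ0 hθ1 k) (mul_nonneg h1θ.le (pos θ j).le)
    _ = (k : ℝ) ^ (1 - θ) * powerWeight θ j := by field_simp
    _ ≤ blockSum (powerWeight θ) k j := rpow_mul_le_blockSum hθ0 hk j

theorem blockSum_le_two_rpow_mul_mul_sum (hθ : 0 ≤ θ) {k : ℕ} (hk : 0 < k) (j : ℕ) :
    blockSum (powerWeight θ) k j ≤
      2 ^ θ * powerWeight θ j * ∑ n ∈ range k, powerWeight θ n := by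
  have hW0 : 0 ≤ ∑ n ∈ range k, powerWeight θ n := sum_nonneg fun n _ => (pos θ n).le
  have hW : (k : ℝ) ^ (1 - θ) ≤ ∑ n ∈ range k, powerWeight θ n := by
    simpa using rpow_mul_le_blockSum hθ hk 0
  rcases j.eq_zero_or_pos with rfl | hj
  · simpa using le_mul_of_one_le_left hW0 (Real.one_le_rpow one_le_two hθ)
  have hjR : (0 : ℝ) < j := by exact_mod_cast hj
  -- `j + 1 ≤ 2 j` is what costs the factor `2 ^ θ`
  have hj2 : (j : ℝ) ^ (-θ) ≤ 2 ^ θ * powerWeight θ j := by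
    calc (j : ℝ) ^ (-θ) = 2 ^ θ * (2 * j : ℝ) ^ (-θ) := by
          rw [Real.mul_rpow zero_le_two hjR.le, ← mul_assoc, ← Real.rpow_add two_pos]; simp
      _ ≤ 2 ^ θ * powerWeight θ j := by
          have : (1 : ℝ) ≤ j := by exact_mod_cast hj
          gcongr
          exact Real.rpow_le_rpow_of_nonpos (by positivity) (by linarith) (neg_nonpos.2 hθ)
  calc blockSum (powerWeight θ) k j ≤ (k : ℝ) ^ (1 - θ) * (j : ℝ) ^ (-θ) :=
        blockSum_le_rpow_mul hθ hk hj
    _ ≤ (∑ n ∈ range k, powerWeight θ n) * (2 ^ θ * powerWeight θ j) :=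
        mul_le_mul hW hj2 (by positivity) hW0
    _ = 2 ^ θ * powerWeight θ j * ∑ n ∈ range k, powerWeight θ n := by ring

theorem mul_sum_le_mul_blockSum (hθ0 : 0 ≤ θ) (hθ1 : θ < 1) {k : ℕ} (hk : 0 < k) (j : ℕ) :
    powerWeight θ j * ∑ n ∈ range k, powerWeight θ n ≤
      2 ^ θ / (1 - θ) * blockSum (powerWeight θ) k j := by
  have hB0 : 0 ≤ blockSum (powerWeight θ) k j := sum_nonneg fun n _ => (pos θ _).le
  rw [div_mul_eq_mul_div, le_div_iff₀ (by linarith)]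
  calc (powerWeight θ j * ∑ n ∈ range k, powerWeight θ n) * (1 - θ)
      = (1 - θ) * powerWeight θ j * ∑ n ∈ range k, powerWeight θ n := by ring
    _ ≤ blockSum (powerWeight θ) k j := one_sub_mul_mul_sum_le_blockSum hθ0 hθ1 hk j
    _ ≤ 2 ^ θ * blockSum (powerWeight θ) k j :=
        le_mul_of_one_le_left hB0 (Real.one_le_rpow one_le_two hθ0)

theorem blockSum_le_mul_mul_sum (hθ0 : 0 ≤ θ) (hθ1 : θ < 1) {k : ℕ} (hk : 0 < k) (j : ℕ) :
    blockSum (powerWeight θ) k j ≤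
      2 ^ θ / (1 - θ) * powerWeight θ j * ∑ n ∈ range k, powerWeight θ n := by
  have h2θ : (2 : ℝ) ^ θ ≤ 2 ^ θ / (1 - θ) :=
    le_div_self (by positivity) (by linarith) (by linarith)
  calc blockSum (powerWeight θ) k j ≤ 2 ^ θ * powerWeight θ j * ∑ n ∈ range k, powerWeight θ n :=
        blockSum_le_two_rpow_mul_mul_sum hθ0 hk j
    _ ≤ 2 ^ θ / (1 - θ) * powerWeight θ j * ∑ n ∈ range k, powerWeight θ n :=
        mul_le_mul_of_nonneg_right (mul_le_mul_of_nonneg_right h2θ (pos θ j).le)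
          (sum_nonneg fun n _ => (pos θ n).le)

end powerWeight

theorem two_sub_two_rpow_div_eq {θ : ℝ} (hθ : θ < 1) :
    (2 - 2 ^ θ) / (2 ^ (1 - θ) - 1) = (2 : ℝ) ^ θ := by
  have h2θ : (2 : ℝ) ^ θ < 2 := by
    simpa using Real.rpow_lt_rpow_of_exponent_lt one_lt_two hθ
  have hsplit : (2 : ℝ) ^ θ * 2 ^ (1 - θ) = 2 := by
    rw [← Real.rpow_add two_pos]; norm_num
  rw [div_eq_iff (by nlinarith [Real.rpow_pos_of_pos two_pos θ])]
  linarith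

/-- For `w_n = n^{-θ}` (`0 < θ < 1`): the explicit weight comparison
`((1-θ)/2) w_i ≤ w_i^{(k)} ≤ ((2-2^θ)/(2^{1-θ}-1)) w_i` for all `i, k`, and consequently the
normalized constant-coefficient block basis `d_i^{(k)} = W_k^{-1/p} Σ_{n=(i-1)k+1}^{ik} e_n`
of `d(w,p)` is `C`-equivalent to the unit vector basis, with `C` depending only on `θ` and `p`
(not on `k`).  Here coordinates are indexed from `0`, so `w n = (n+1)^{-θ}` and block `i`
(one-based) occupies coordinates `(i-1)k, …, ik-1`; a general finite linear combination
`Σ_i b_i d_i^{(k)}` is the sequence `n ↦ b_{n/k} · W_k^{-1/p}`. -/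
theorem stmt18 (θ : ℝ) (hθ0 : 0 < θ) (hθ1 : θ < 1) (p : ℝ) (hp : 1 ≤ p) :
    (∀ i k : ℕ, 1 ≤ i → 1 ≤ k →
      (1 - θ) / 2 * (i : ℝ) ^ (-θ) ≤
          (∑ n ∈ Finset.Ico ((i - 1) * k) (i * k), ((n : ℝ) + 1) ^ (-θ)) /
            (∑ n ∈ Finset.range k, ((n : ℝ) + 1) ^ (-θ)) ∧
        (∑ n ∈ Finset.Ico ((i - 1) * k) (i * k), ((n : ℝ) + 1) ^ (-θ)) /
            (∑ n ∈ Finset.range k, ((n : ℝ) + 1) ^ (-θ)) ≤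
          (2 - 2 ^ θ) / (2 ^ (1 - θ) - 1) * (i : ℝ) ^ (-θ)) ∧
    ∃ C ≥ (1 : ℝ), ∀ k : ℕ, 1 ≤ k → ∀ b : ℕ → ℝ, (Function.support b).Finite →
      lorentzNorm (fun n => ((n : ℝ) + 1) ^ (-θ)) p b ≤
          C * lorentzNorm (fun n => ((n : ℝ) + 1) ^ (-θ)) p
            (fun n => b (n / k) *
              (∑ m ∈ Finset.range k, ((m : ℝ) + 1) ^ (-θ)) ^ (-(1 / p))) ∧
        lorentzNorm (fun n => ((n : ℝ) + 1) ^ (-θ)) p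
            (fun n => b (n / k) *
              (∑ m ∈ Finset.range k, ((m : ℝ) + 1) ^ (-θ)) ^ (-(1 / p))) ≤
          C * lorentzNorm (fun n => ((n : ℝ) + 1) ^ (-θ)) p b := by
  have h1θ : 0 < 1 - θ := by linarith
  refine ⟨fun i k hi hk => ?_, (2 ^ θ / (1 - θ)) ^ (1 / p), ?_, fun k hk b hb => ?_⟩
  · obtain ⟨j, rfl⟩ := Nat.exists_eq_add_of_le' hi
    have hW : 0 < ∑ n ∈ range k, powerWeight θ n :=
      sum_pos (fun n _ => powerWeight.pos θ n) (nonempty_range_iff.2 (by omega))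
    simp only [Nat.add_sub_cancel, Nat.cast_add_one, ← powerWeight_apply, sum_Ico_eq_blockSum,
      two_sub_two_rpow_div_eq hθ1]
    rw [le_div_iff₀ hW, div_le_iff₀ hW]
    refine ⟨le_trans ?_ (powerWeight.one_sub_mul_mul_sum_le_blockSum hθ0.le hθ1 hk j),
      powerWeight.blockSum_le_two_rpow_mul_mul_sum hθ0.le hk j⟩
    exact mul_le_mul_of_nonneg_right
      (mul_le_mul_of_nonneg_right (by linarith) (powerWeight.pos θ j).le) hW.le
  · have := Real.one_le_rpow one_le_two hθ0.le
    exact Real.one_le_rpow ((one_le_div h1θ).2 (by linarith)) (by positivity)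
  · exact lorentzNorm_blockExpansion_le (powerWeight.antitone hθ0.le) (powerWeight.pos θ) hk
      (powerWeight.mul_sum_le_mul_blockSum hθ0.le hθ1 hk)
      (powerWeight.blockSum_le_mul_mul_sum hθ0.le hθ1 hk) (by linarith) hb
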